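/- Let ω : ℝⁿ → ℝ be bounded. There is a constant B, depending only on ‖ω‖_{L∞(ℝⁿ)}, such that for every ε with 0 < ε ≤ 1, the sup-convolution ω^ε and the inf-convolution ω_ε are Lipschitz continuous on ℝⁿ with Lipschitz constant at most B/ε. -/
import Mathlib

set_option maxHeartbeats 1000000

noncomputable section
open Set Filter

/-- Sup-convolution `ω^ε(x) = sup_y (ω(y) − ε⁻¹|x − y|²)`. -/
def supConv {n : ℕ} (ε : ℝ) (ω : EuclideanSpace ℝ (Fin n) → ℝ)
    (x : EuclideanSpace ℝ (Fin n)) : ℝ :=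
  sSup {r | ∃ y : EuclideanSpace ℝ (Fin n), r = ω y - ε⁻¹ * ‖x - y‖ ^ 2}

/-- Inf-convolution `ω_ε(x) = inf_y (ω(y) + ε⁻¹|x − y|²)`. -/
def infConv {n : ℕ} (ε : ℝ) (ω : EuclideanSpace ℝ (Fin n) → ℝ)
    (x : EuclideanSpace ℝ (Fin n)) : ℝ :=
  sInf {r | ∃ y : EuclideanSpace ℝ (Fin n), r = ω y + ε⁻¹ * ‖x - y‖ ^ 2}

private lemma sc_nonempty {n : ℕ} (ε : ℝ) (ω : EuclideanSpace ℝ (Fin n) → ℝ)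
    (x : EuclideanSpace ℝ (Fin n)) :
    Set.Nonempty {r | ∃ y : EuclideanSpace ℝ (Fin n), r = ω y - ε⁻¹ * ‖x - y‖ ^ 2} :=
  ⟨ω x - ε⁻¹ * ‖x - x‖ ^ 2, x, rfl⟩

private lemma sc_bdd {n : ℕ} {ε M : ℝ} {ω : EuclideanSpace ℝ (Fin n) → ℝ}
    (hε : 0 < ε) (hM : ∀ x, |ω x| ≤ M) (x : EuclideanSpace ℝ (Fin n)) :
    BddAbove {r | ∃ y : EuclideanSpace ℝ (Fin n), r = ω y - ε⁻¹ * ‖x - y‖ ^ 2} := by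
  refine ⟨M, ?_⟩
  rintro r ⟨y, rfl⟩
  have h1 := abs_le.1 (hM y)
  have h2 : 0 ≤ ε⁻¹ * ‖x - y‖ ^ 2 :=
    mul_nonneg (inv_nonneg.2 hε.le) (sq_nonneg _)
  linarith [h1.2]

private lemma supConv_le_M {n : ℕ} {ε M : ℝ} {ω : EuclideanSpace ℝ (Fin n) → ℝ}
    (hε : 0 < ε) (hM : ∀ x, |ω x| ≤ M) (x : EuclideanSpace ℝ (Fin n)) :
    supConv ε ω x ≤ M := by
  apply csSup_le (sc_nonempty ε ω x)
  rintro r ⟨y, rfl⟩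
  have h1 := abs_le.1 (hM y)
  have h2 : 0 ≤ ε⁻¹ * ‖x - y‖ ^ 2 :=
    mul_nonneg (inv_nonneg.2 hε.le) (sq_nonneg _)
  linarith [h1.2]

private lemma le_supConv {n : ℕ} {ε M : ℝ} {ω : EuclideanSpace ℝ (Fin n) → ℝ}
    (hε : 0 < ε) (hM : ∀ x, |ω x| ≤ M) (x : EuclideanSpace ℝ (Fin n)) :
    ω x ≤ supConv ε ω x := by
  apply le_csSup (sc_bdd hε hM x)
  exact ⟨x, by simp⟩

/-- One-sided Lipschitz estimate for the sup-convolution. -/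
private lemma key {n : ℕ} {ε M : ℝ} {ω : EuclideanSpace ℝ (Fin n) → ℝ}
    (hε : 0 < ε) (hε1 : ε ≤ 1) (hM : ∀ x, |ω x| ≤ M)
    (x y : EuclideanSpace ℝ (Fin n)) :
    supConv ε ω x - supConv ε ω y ≤
      (2 * M + 2 * Real.sqrt (2 * M + 1) + 1) / ε * ‖x - y‖ := by
  set B : ℝ := 2 * M + 2 * Real.sqrt (2 * M + 1) + 1 with hB
  have hM0 : 0 ≤ M := (abs_nonneg _).trans (hM 0)
  have ht0 : 0 ≤ Real.sqrt (2 * M + 1) := Real.sqrt_nonneg _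
  have htt : Real.sqrt (2 * M + 1) * Real.sqrt (2 * M + 1) = 2 * M + 1 :=
    Real.mul_self_sqrt (by linarith)
  set t : ℝ := Real.sqrt (2 * M + 1)
  set s : ℝ := Real.sqrt ε with hs
  have hs0 : 0 ≤ s := Real.sqrt_nonneg _
  have hss : s * s = ε := Real.mul_self_sqrt hε.le
  have hs1 : s ≤ 1 := Real.sqrt_le_one.2 hε1
  set d : ℝ := ‖x - y‖ with hd
  have hd0 : 0 ≤ d := norm_nonneg _
  rcases le_or_gt (d ^ 2) ε with hcase | hcase
  · -- small distance case
    have hds : d ≤ s := by nlinarith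
    apply le_of_forall_pos_le_add
    intro δ hδ
    set δ' : ℝ := min δ 1 with hδ'def
    have hδ'0 : 0 < δ' := lt_min hδ one_pos
    have hδ'1 : δ' ≤ 1 := min_le_right _ _
    have hδ'δ : δ' ≤ δ := min_le_left _ _
    obtain ⟨r, ⟨z, rfl⟩, hz⟩ :=
      exists_lt_of_lt_csSup (sc_nonempty ε ω x)
        (show supConv ε ω x - δ' < supConv ε ω x by linarith)
    have hx := le_supConv hε hM x
    have hωx := abs_le.1 (hM x)
    have hωz := abs_le.1 (hM z)
    -- the near-optimal point is close to x
    have hq : ε⁻¹ * ‖x - z‖ ^ 2 ≤ 2 * M + 1 := by linarith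
    have hq2 : ‖x - z‖ ^ 2 ≤ (2 * M + 1) * ε := by
      have h := mul_le_mul_of_nonneg_left hq hε.le
      rw [← mul_assoc, mul_inv_cancel₀ hε.ne', one_mul] at h
      linarith
    have ha0 : 0 ≤ ‖x - z‖ := norm_nonneg _
    have hq3 : ‖x - z‖ ^ 2 ≤ (t * s) * (t * s) := by
      rw [show (t * s) * (t * s) = (t * t) * (s * s) by ring, htt, hss]; exact hq2
    have hxz : ‖x - z‖ ≤ t * s := by nlinarith [mul_nonneg ht0 hs0]
    have hb : ω z - ε⁻¹ * ‖y - z‖ ^ 2 ≤ supConv ε ω y :=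
      le_csSup (sc_bdd hε hM y) ⟨z, rfl⟩
    have htri : ‖y - z‖ ≤ d + ‖x - z‖ := by
      have := norm_sub_le_norm_sub_add_norm_sub y x z
      rw [show ‖y - x‖ = d from norm_sub_rev y x] at this
      linarith
    have hb0 : 0 ≤ ‖y - z‖ := norm_nonneg _
    -- core quadratic estimate
    have hcore : ‖y - z‖ ^ 2 - ‖x - z‖ ^ 2 ≤ B * d := by
      have hsq : ‖y - z‖ ^ 2 ≤ (d + ‖x - z‖) ^ 2 := by nlinarith
      have h1 : ‖x - z‖ * d ≤ t * s * d := mul_le_mul_of_nonneg_right hxz hd0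
      have h2 : d * d ≤ s * d := mul_le_mul_of_nonneg_right hds hd0
      have h3 : t * s ≤ t := mul_le_of_le_one_right ht0 hs1
      have h4 : t * s * d ≤ t * d := mul_le_mul_of_nonneg_right h3 hd0
      have h5 : s * d ≤ d := mul_le_of_le_one_left hd0 hs1
      have h6 : 0 ≤ M * d := mul_nonneg hM0 hd0
      nlinarith
    have hcore2 : ε⁻¹ * ‖y - z‖ ^ 2 - ε⁻¹ * ‖x - z‖ ^ 2 ≤ B / ε * d := by
      have h := mul_le_mul_of_nonneg_right hcore (inv_nonneg.2 hε.le)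
      calc ε⁻¹ * ‖y - z‖ ^ 2 - ε⁻¹ * ‖x - z‖ ^ 2
          = (‖y - z‖ ^ 2 - ‖x - z‖ ^ 2) * ε⁻¹ := by ring
        _ ≤ B * d * ε⁻¹ := h
        _ = B / ε * d := by ring
    linarith
  · -- large distance case: use the trivial bound 2M
    have hεd : ε ≤ d := by nlinarith
    have h1 := supConv_le_M hε hM x
    have h2 := le_supConv hε hM y
    have hωy := abs_le.1 (hM y)
    have hBd : 2 * M ≤ B / ε * d := by
      rw [div_mul_eq_mul_div, le_div_iff₀ hε]
      nlinarith
    linarith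

private lemma infConv_eq_neg {n : ℕ} (ε : ℝ) (ω : EuclideanSpace ℝ (Fin n) → ℝ)
    (x : EuclideanSpace ℝ (Fin n)) :
    infConv ε ω x = -(supConv ε (fun y => -ω y) x) := by
  unfold infConv supConv
  rw [Real.sInf_def, neg_inj]
  congr 1
  ext r
  simp only [Set.mem_neg, Set.mem_setOf_eq]
  constructor
  · rintro ⟨y, hy⟩; exact ⟨y, by linarith⟩
  · rintro ⟨y, hy⟩; exact ⟨y, by linarith⟩

/-- For bounded `ω` there is a constant `B` (depending only on
`‖ω‖_{L∞}`, here furnished for any uniform bound `M` on `|ω|`) such that for every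
`0 < ε ≤ 1` the functions `ω^ε` and `ω_ε` are Lipschitz with constant at most `B/ε`. -/
theorem stmt11 {n : ℕ} (ω : EuclideanSpace ℝ (Fin n) → ℝ) (M : ℝ)
    (hM : ∀ x, |ω x| ≤ M) :
    ∃ B : ℝ, 0 < B ∧ ∀ ε : ℝ, 0 < ε → ε ≤ 1 →
      (∀ x y : EuclideanSpace ℝ (Fin n),
        |supConv ε ω x - supConv ε ω y| ≤ B / ε * ‖x - y‖) ∧
      (∀ x y : EuclideanSpace ℝ (Fin n),
        |infConv ε ω x - infConv ε ω y| ≤ B / ε * ‖x - y‖) := by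
  have hM0 : 0 ≤ M := (abs_nonneg _).trans (hM 0)
  refine ⟨2 * M + 2 * Real.sqrt (2 * M + 1) + 1, by positivity, fun ε hε hε1 => ⟨?_, ?_⟩⟩
  · intro x y
    rw [abs_sub_le_iff]
    refine ⟨key hε hε1 hM x y, ?_⟩
    have := key hε hε1 hM y x
    rwa [norm_sub_rev] at this
  · intro x y
    have hM' : ∀ z, |(fun y => -ω y) z| ≤ M := fun z => by
      simpa [abs_neg] using hM z
    rw [infConv_eq_neg, infConv_eq_neg,
      show -(supConv ε (fun y => -ω y) x) - -(supConv ε (fun y => -ω y) y)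
        = -(supConv ε (fun y => -ω y) x - supConv ε (fun y => -ω y) y) by ring,
      abs_neg, abs_sub_le_iff]
    refine ⟨key hε hε1 hM' x y, ?_⟩
    have := key hε hε1 hM' y x
    rwa [norm_sub_rev] at this
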